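/- arXiv:2506.01397 — 9 statements merged into one kernel-verified Lean document; each statement's English description precedes it below -/
import Mathlib

section
/- Let {e, ν, b} : I → (ℝ³)³ be a smooth orthonormal frame satisfying the Frenet–Serret type equations e' = κ₁ν + κ₂b, ν' = -κ₁e + κ₃b, b' = -κ₂e - κ₃ν for smooth functions κ₁, κ₂, κ₃. Let γ̃ : I → ℝ³ satisfy γ̃' = l·e for a smooth function l. Assume (κ₁(t), κ₃(t)) ≠ (0,0) for all t. Define δ_ν = (κ₃e + κ₁b)/√(κ₃² + κ₁²). Then for each t, the set {X ∈ ℝ³ : ν(t)·(X - γ̃(t)) = 0 and ν'(t)·(X - γ̃(t)) = 0} equals the line {γ̃(t) + aδ_ν(t) : a ∈ ℝ}. -/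
open Matrix Real

lemma span3 (e ν b : Fin 3 → ℝ)
    (hee : e ⬝ᵥ e = 1) (hνν : ν ⬝ᵥ ν = 1) (hbb : b ⬝ᵥ b = 1)
    (heν : e ⬝ᵥ ν = 0) (heb : e ⬝ᵥ b = 0) (hνb : ν ⬝ᵥ b = 0)
    (Y : Fin 3 → ℝ) :
    Y = (e ⬝ᵥ Y) • e + (ν ⬝ᵥ Y) • ν + (b ⬝ᵥ Y) • b := by
  simp only [dotProduct, Fin.sum_univ_three] at hee hνν hbb heν heb hνb ⊢
  have h1 : (Matrix.of ![e, ν, b]) * (Matrix.of ![e, ν, b])ᵀ = 1 := by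
    ext i j
    fin_cases i <;> fin_cases j <;>
      simp [Matrix.mul_apply, Fin.sum_univ_three, Matrix.one_apply,
        Matrix.vecHead, Matrix.vecTail] <;>
      linarith
  have h2 : (Matrix.of ![e, ν, b])ᵀ * (Matrix.of ![e, ν, b]) = 1 :=
    mul_eq_one_comm.mp h1
  have h3 : ∀ j j', e j * e j' + ν j * ν j' + b j * b j'
      = if j = j' then (1:ℝ) else 0 := by
    intro j j'
    have := congrFun (congrFun h2 j) j'
    simpa [Matrix.mul_apply, Fin.sum_univ_three, Matrix.one_apply,
      Matrix.vecHead, Matrix.vecTail] using this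
  have key : ∀ j, Y j = Y 0 * (e j * e 0 + ν j * ν 0 + b j * b 0)
      + Y 1 * (e j * e 1 + ν j * ν 1 + b j * b 1)
      + Y 2 * (e j * e 2 + ν j * ν 2 + b j * b 2) := by
    intro j
    rw [h3 j 0, h3 j 1, h3 j 2]
    fin_cases j <;> simp [Fin.ext_iff]
  funext j
  simp only [Pi.add_apply, Pi.smul_apply, smul_eq_mul]
  linear_combination key j

/-- the envelope conditions `ν·(X-γ̃) = 0`, `ν'·(X-γ̃) = 0`
describe, for each `t`, the line through `γ̃(t)` in the direction
`δ_ν = (κ₃ e + κ₁ b)/√(κ₃² + κ₁²)`. -/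
theorem envelope_line_nu
    (e ν b : ℝ → Fin 3 → ℝ) (κ₁ κ₂ κ₃ l : ℝ → ℝ) (γ : ℝ → Fin 3 → ℝ)
    (he : ContDiff ℝ (⊤ : ℕ∞) e) (hν : ContDiff ℝ (⊤ : ℕ∞) ν) (hb : ContDiff ℝ (⊤ : ℕ∞) b)
    (hκ₁ : ContDiff ℝ (⊤ : ℕ∞) κ₁) (hκ₂ : ContDiff ℝ (⊤ : ℕ∞) κ₂) (hκ₃ : ContDiff ℝ (⊤ : ℕ∞) κ₃)
    (hl : ContDiff ℝ (⊤ : ℕ∞) l) (hγ : ContDiff ℝ (⊤ : ℕ∞) γ)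
    -- orthonormal frame
    (hee : ∀ t, e t ⬝ᵥ e t = 1) (hνν : ∀ t, ν t ⬝ᵥ ν t = 1)
    (hbb : ∀ t, b t ⬝ᵥ b t = 1)
    (heν : ∀ t, e t ⬝ᵥ ν t = 0) (heb : ∀ t, e t ⬝ᵥ b t = 0)
    (hνb : ∀ t, ν t ⬝ᵥ b t = 0)
    -- Frenet–Serret type formulas
    (hFe : ∀ t, deriv e t = κ₁ t • ν t + κ₂ t • b t)
    (hFν : ∀ t, deriv ν t = -(κ₁ t) • e t + κ₃ t • b t)
    (hFb : ∀ t, deriv b t = -(κ₂ t) • e t + -(κ₃ t) • ν t)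
    -- γ̃' = l e
    (hγ' : ∀ t, deriv γ t = l t • e t)
    -- (κ₁, κ₃) ≠ (0,0)
    (hne : ∀ t, (κ₁ t, κ₃ t) ≠ (0, 0))
    (δν : ℝ → Fin 3 → ℝ)
    (hδν : ∀ t, δν t = (Real.sqrt ((κ₃ t)^2 + (κ₁ t)^2))⁻¹ •
        (κ₃ t • e t + κ₁ t • b t)) :
    ∀ t, {X : Fin 3 → ℝ | ν t ⬝ᵥ (X - γ t) = 0 ∧ deriv ν t ⬝ᵥ (X - γ t) = 0}
      = {X : Fin 3 → ℝ | ∃ a : ℝ, X = γ t + a • δν t} := by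
  intro t
  have hpos : 0 < (κ₃ t)^2 + (κ₁ t)^2 := by
    have h : κ₁ t ≠ 0 ∨ κ₃ t ≠ 0 := by
      by_contra h
      push_neg at h
      exact hne t (by simp [h.1, h.2])
    rcases h with h | h <;> positivity
  set s := Real.sqrt ((κ₃ t)^2 + (κ₁ t)^2) with hsdef
  have hs : 0 < s := Real.sqrt_pos.mpr hpos
  have hs2 : s^2 = (κ₃ t)^2 + (κ₁ t)^2 := Real.sq_sqrt hpos.le
  have hνe : ν t ⬝ᵥ e t = 0 := by rw [dotProduct_comm]; exact heν t
  have hbe : b t ⬝ᵥ e t = 0 := by rw [dotProduct_comm]; exact heb t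
  have hbν : b t ⬝ᵥ ν t = 0 := by rw [dotProduct_comm]; exact hνb t
  ext X
  simp only [Set.mem_setOf_eq]
  constructor
  · rintro ⟨h₂, h₃⟩
    set c1 := e t ⬝ᵥ (X - γ t) with hc1
    set c3 := b t ⬝ᵥ (X - γ t) with hc3
    have hspan : X - γ t = c1 • e t + (ν t ⬝ᵥ (X - γ t)) • ν t + c3 • b t :=
      span3 (e t) (ν t) (b t) (hee t) (hνν t) (hbb t) (heν t) (heb t) (hνb t) _
    rw [h₂] at hspan
    have hrel : -(κ₁ t) * c1 + κ₃ t * c3 = 0 := by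
      rw [hFν t, add_dotProduct, smul_dotProduct, smul_dotProduct, smul_eq_mul,
        smul_eq_mul] at h₃
      exact h₃
    refine ⟨(κ₃ t * c1 + κ₁ t * c3) / s, ?_⟩
    rw [hδν t, ← hsdef]
    funext j
    have hcomp := congrFun hspan j
    simp only [Pi.add_apply, Pi.sub_apply, Pi.smul_apply, smul_eq_mul, zero_mul,
      add_zero] at hcomp ⊢
    have hsne : s ≠ 0 := ne_of_gt hs
    have hss : s * s = (κ₃ t)^2 + (κ₁ t)^2 := by rw [← hs2]; ring
    field_simp
    linear_combination (X j - γ t j) * hss + ((κ₃ t)^2 + (κ₁ t)^2) * hcomp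
      + (κ₃ t * b t j - κ₁ t * e t j) * hrel
  · rintro ⟨a, rfl⟩
    have hY : γ t + a • δν t - γ t = a • δν t := add_sub_cancel_left _ _
    rw [hY, hδν t, ← hsdef, hFν t]
    constructor
    · simp [dotProduct_smul, dotProduct_add, smul_eq_mul, hνe, hνb t]
    · simp [dotProduct_smul, dotProduct_add, add_dotProduct, smul_dotProduct,
        smul_eq_mul, hee t, hbb t, heb t, hbe]
      ring
end

section
/- Under the same frame assumptions (e' = κ₁ν + κ₂b, ν' = -κ₁e + κ₃b, b' = -κ₂e - κ₃ν, γ̃' = l·e), assume (κ₂(t), κ₃(t)) ≠ (0,0) for all t. Define δ_b = (κ₃e - κ₂ν)/√(κ₃² + κ₂²). Then for each t, the set {X ∈ ℝ³ : b(t)·(X - γ̃(t)) = 0 and b'(t)·(X - γ̃(t)) = 0} equals the line {γ̃(t) + aδ_b(t) : a ∈ ℝ}. -/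
open Matrix Real

lemma orthonormal_expand (E N B v : Fin 3 → ℝ)
    (hEE : E ⬝ᵥ E = 1) (hNN : N ⬝ᵥ N = 1) (hBB : B ⬝ᵥ B = 1)
    (hEN : E ⬝ᵥ N = 0) (hEB : E ⬝ᵥ B = 0) (hNB : N ⬝ᵥ B = 0) :
    v = (E ⬝ᵥ v) • E + (N ⬝ᵥ v) • N + (B ⬝ᵥ v) • B := by
  classical
  set M : Matrix (Fin 3) (Fin 3) ℝ := Matrix.of ![E, N, B] with hMdef
  have hM : M * Mᵀ = 1 := by
    ext i j
    simp only [dotProduct, Fin.sum_univ_three] at hEE hNN hBB hEN hEB hNB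
    fin_cases i <;> fin_cases j <;>
      simp [hMdef, Matrix.mul_apply, Matrix.transpose_apply, Matrix.one_apply,
        Fin.sum_univ_three, Matrix.cons_val', Matrix.cons_val_zero, Matrix.cons_val_one,
        Matrix.head_cons, Matrix.vecHead, Matrix.vecTail, Function.comp] <;> linarith
  have hM' : Mᵀ * M = 1 := mul_eq_one_comm.mp hM
  have key : Mᵀ *ᵥ (M *ᵥ v) = v := by
    rw [Matrix.mulVec_mulVec, hM', Matrix.one_mulVec]
  funext j
  have h1 : (Mᵀ *ᵥ (M *ᵥ v)) j = v j := by rw [key]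
  rw [← h1]
  simp [Matrix.mulVec, dotProduct, Fin.sum_univ_three, hMdef, Matrix.transpose_apply]
  ring

/-- envelope conditions for b
describe, for each `t`, the line through `γ̃(t)` in the direction
`δ_b = (κ₃ e - κ₂ ν)/√(κ₃² + κ₂²)`. -/
theorem envelope_line_b
    (e ν b : ℝ → Fin 3 → ℝ) (κ₁ κ₂ κ₃ l : ℝ → ℝ) (γ : ℝ → Fin 3 → ℝ)
    (he : ContDiff ℝ (⊤ : ℕ∞) e) (hν : ContDiff ℝ (⊤ : ℕ∞) ν) (hb : ContDiff ℝ (⊤ : ℕ∞) b)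
    (hκ₁ : ContDiff ℝ (⊤ : ℕ∞) κ₁) (hκ₂ : ContDiff ℝ (⊤ : ℕ∞) κ₂) (hκ₃ : ContDiff ℝ (⊤ : ℕ∞) κ₃)
    (hl : ContDiff ℝ (⊤ : ℕ∞) l) (hγ : ContDiff ℝ (⊤ : ℕ∞) γ)
    -- orthonormal frame
    (hee : ∀ t, e t ⬝ᵥ e t = 1) (hνν : ∀ t, ν t ⬝ᵥ ν t = 1)
    (hbb : ∀ t, b t ⬝ᵥ b t = 1)
    (heν : ∀ t, e t ⬝ᵥ ν t = 0) (heb : ∀ t, e t ⬝ᵥ b t = 0)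
    (hνb : ∀ t, ν t ⬝ᵥ b t = 0)
    -- Frenet–Serret type formulas
    (hFe : ∀ t, deriv e t = κ₁ t • ν t + κ₂ t • b t)
    (hFν : ∀ t, deriv ν t = -(κ₁ t) • e t + κ₃ t • b t)
    (hFb : ∀ t, deriv b t = -(κ₂ t) • e t + -(κ₃ t) • ν t)
    -- γ̃' = l e
    (hγ' : ∀ t, deriv γ t = l t • e t)
    -- (κ₁, κ₃) ≠ (0,0)
    (hne : ∀ t, (κ₂ t, κ₃ t) ≠ (0, 0))
    (δb : ℝ → Fin 3 → ℝ)
    (hδb : ∀ t, δb t = (Real.sqrt ((κ₃ t)^2 + (κ₂ t)^2))⁻¹ •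
        (κ₃ t • e t + -(κ₂ t) • ν t)) :
    ∀ t, {X : Fin 3 → ℝ | b t ⬝ᵥ (X - γ t) = 0 ∧ deriv b t ⬝ᵥ (X - γ t) = 0}
      = {X : Fin 3 → ℝ | ∃ a : ℝ, X = γ t + a • δb t} := by
  intro t
  have hr2 : (0:ℝ) < (κ₃ t)^2 + (κ₂ t)^2 := by
    have h23 : κ₂ t ≠ 0 ∨ κ₃ t ≠ 0 := by
      by_contra h
      push_neg at h
      exact hne t (Prod.ext h.1 h.2)
    rcases h23 with h | h
    · have h2 : 0 < (κ₂ t)^2 := (sq_nonneg _).lt_of_ne (Ne.symm (pow_ne_zero 2 h))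
      nlinarith [sq_nonneg (κ₃ t)]
    · have h3 : 0 < (κ₃ t)^2 := (sq_nonneg _).lt_of_ne (Ne.symm (pow_ne_zero 2 h))
      nlinarith [sq_nonneg (κ₂ t)]
  set r : ℝ := Real.sqrt ((κ₃ t)^2 + (κ₂ t)^2) with hrdef
  have hr : 0 < r := Real.sqrt_pos.mpr hr2
  have hrsq : r ^ 2 = (κ₃ t)^2 + (κ₂ t)^2 := Real.sq_sqrt hr2.le
  have hbe : b t ⬝ᵥ e t = 0 := by rw [dotProduct_comm]; exact heb t
  have hνe : ν t ⬝ᵥ e t = 0 := by rw [dotProduct_comm]; exact heν t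
  have hbν : b t ⬝ᵥ ν t = 0 := by rw [dotProduct_comm]; exact hνb t
  ext X
  simp only [Set.mem_setOf_eq]
  constructor
  · rintro ⟨h1, h2⟩
    rw [hFb] at h2
    set v : Fin 3 → ℝ := X - γ t with hvdef
    set α : ℝ := e t ⬝ᵥ v with hα
    set β : ℝ := ν t ⬝ᵥ v with hβ
    rw [add_dotProduct, smul_dotProduct, smul_dotProduct, smul_eq_mul, smul_eq_mul] at h2
    have hcon : -κ₂ t * α + -κ₃ t * β = 0 := h2
    have hexp : v = α • e t + β • ν t + (b t ⬝ᵥ v) • b t :=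
      orthonormal_expand (e t) (ν t) (b t) v (hee t) (hνν t) (hbb t)
        (heν t) (heb t) (hνb t)
    rw [h1] at hexp
    refine ⟨(α * κ₃ t - β * κ₂ t) / r, ?_⟩
    have hXv : X = γ t + v := by simp [hvdef]
    have key1 : (α * κ₃ t - β * κ₂ t) * κ₃ t = α * ((κ₃ t)^2 + (κ₂ t)^2) := by
      linear_combination (κ₂ t) * hcon
    have key2 : (α * κ₃ t - β * κ₂ t) * -κ₂ t = β * ((κ₃ t)^2 + (κ₂ t)^2) := by
      linear_combination (κ₃ t) * hcon
    have hc1 : (α * κ₃ t - β * κ₂ t) / r * (r⁻¹ * κ₃ t) = α := by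
      rw [show (α * κ₃ t - β * κ₂ t) / r * (r⁻¹ * κ₃ t)
          = ((α * κ₃ t - β * κ₂ t) * κ₃ t) / r ^ 2 from by ring,
        hrsq, key1, mul_div_assoc, div_self hr2.ne', mul_one]
    have hc2 : (α * κ₃ t - β * κ₂ t) / r * (r⁻¹ * -κ₂ t) = β := by
      rw [show (α * κ₃ t - β * κ₂ t) / r * (r⁻¹ * -κ₂ t)
          = ((α * κ₃ t - β * κ₂ t) * -κ₂ t) / r ^ 2 from by ring,
        hrsq, key2, mul_div_assoc, div_self hr2.ne', mul_one]
    have hc1' : r⁻¹ * ((α * κ₃ t - β * κ₂ t) / r * κ₃ t) = α := by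
      linear_combination hc1
    have hc2' : r⁻¹ * ((α * κ₃ t - β * κ₂ t) / r * -κ₂ t) = β := by
      linear_combination hc2
    rw [hXv, hexp, hδb, ← hrdef]
    congr 1
    rw [smul_comm, smul_add, smul_smul, smul_smul, smul_add, smul_smul, smul_smul,
      hc1', hc2']
    simp
  · rintro ⟨a, rfl⟩
    have hv : γ t + a • δb t - γ t = a • δb t := by abel
    rw [hv]
    constructor
    · rw [hδb]
      simp [dotProduct_smul, dotProduct_add, smul_eq_mul, hbe, hbν]
    · rw [hFb, hδb]
      simp only [dotProduct_smul, dotProduct_add, add_dotProduct, smul_dotProduct,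
        smul_eq_mul, hee t, hνν t, heν t, hνe]
      ring
end

section
/- With frame equations e' = κ₁ν + κ₂b, ν' = -κ₁e + κ₃b, b' = -κ₂e - κ₃ν and (κ₁, κ₃) ≠ (0,0), the derivative of δ_ν = (κ₃e + κ₁b)/√(κ₃² + κ₁²) satisfies δ_ν' = β_ν · w, where β_ν = κ₁²κ₂ + κ₂κ₃² + κ₁'κ₃ - κ₁κ₃' and w = (-κ₁e + κ₃b)/(κ₃² + κ₁²)^{3/2}. In particular, δ_ν' = 0 at t if and only if β_ν(t) = 0. -/
open Matrix Real

/-- `δ_ν' = β_ν · w` with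
`β_ν = κ₁²κ₂ + κ₂κ₃² + κ₁'κ₃ - κ₁κ₃'` and
`w = (-κ₁ e + κ₃ b)/(κ₃² + κ₁²)^{3/2}`; in particular `δ_ν'(t) = 0 ↔ β_ν(t) = 0`. -/
theorem deriv_delta_nu
    (e ν b : ℝ → Fin 3 → ℝ) (κ₁ κ₂ κ₃ : ℝ → ℝ)
    (he : ContDiff ℝ (⊤ : ℕ∞) e) (hν : ContDiff ℝ (⊤ : ℕ∞) ν) (hb : ContDiff ℝ (⊤ : ℕ∞) b)
    (hκ₁ : ContDiff ℝ (⊤ : ℕ∞) κ₁) (hκ₂ : ContDiff ℝ (⊤ : ℕ∞) κ₂) (hκ₃ : ContDiff ℝ (⊤ : ℕ∞) κ₃)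
    (hee : ∀ t, e t ⬝ᵥ e t = 1) (hνν : ∀ t, ν t ⬝ᵥ ν t = 1)
    (hbb : ∀ t, b t ⬝ᵥ b t = 1)
    (heν : ∀ t, e t ⬝ᵥ ν t = 0) (heb : ∀ t, e t ⬝ᵥ b t = 0)
    (hνb : ∀ t, ν t ⬝ᵥ b t = 0)
    (hFe : ∀ t, deriv e t = κ₁ t • ν t + κ₂ t • b t)
    (hFν : ∀ t, deriv ν t = -(κ₁ t) • e t + κ₃ t • b t)
    (hFb : ∀ t, deriv b t = -(κ₂ t) • e t + -(κ₃ t) • ν t)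
    (hne : ∀ t, (κ₁ t, κ₃ t) ≠ (0, 0))
    (δν : ℝ → Fin 3 → ℝ) (βν : ℝ → ℝ) (w : ℝ → Fin 3 → ℝ)
    (hδν : δν = fun t => (Real.sqrt ((κ₃ t)^2 + (κ₁ t)^2))⁻¹ •
        (κ₃ t • e t + κ₁ t • b t))
    (hβν : βν = fun t => (κ₁ t)^2 * κ₂ t + κ₂ t * (κ₃ t)^2
        + deriv κ₁ t * κ₃ t - κ₁ t * deriv κ₃ t)
    (hw : w = fun t => (((κ₃ t)^2 + (κ₁ t)^2) ^ ((3:ℝ)/2))⁻¹ •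
        (-(κ₁ t) • e t + κ₃ t • b t)) :
    (∀ t, deriv δν t = βν t • w t) ∧ (∀ t, deriv δν t = 0 ↔ βν t = 0) := by

  have hd : ∀ t, deriv δν t = βν t • w t := by
    intro t
    have hq : 0 < (κ₃ t)^2 + (κ₁ t)^2 := by
      rcases (by
        by_contra h
        push_neg at h
        exact hne t (Prod.ext h.1 h.2) : κ₁ t ≠ 0 ∨ κ₃ t ≠ 0) with h | h <;> positivity
    have hs : 0 < Real.sqrt ((κ₃ t)^2 + (κ₁ t)^2) := Real.sqrt_pos.2 hq
    have hs2 : (Real.sqrt ((κ₃ t)^2 + (κ₁ t)^2))^2 = (κ₃ t)^2 + (κ₁ t)^2 :=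
      Real.sq_sqrt hq.le
    have hde : HasDerivAt e (κ₁ t • ν t + κ₂ t • b t) t := by
      have h := (he.differentiable (by simp) t).hasDerivAt
      rwa [hFe t] at h
    have hdb : HasDerivAt b (-(κ₂ t) • e t + -(κ₃ t) • ν t) t := by
      have h := (hb.differentiable (by simp) t).hasDerivAt
      rwa [hFb t] at h
    have hdκ₁ : HasDerivAt κ₁ (deriv κ₁ t) t := (hκ₁.differentiable (by simp) t).hasDerivAt
    have hdκ₃ : HasDerivAt κ₃ (deriv κ₃ t) t := (hκ₃.differentiable (by simp) t).hasDerivAt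
    have hdq : HasDerivAt (fun u => (κ₃ u)^2 + (κ₁ u)^2)
        (2 * κ₃ t * deriv κ₃ t + 2 * κ₁ t * deriv κ₁ t) t := by
      have h : HasDerivAt (fun u => (κ₃ u)^2 + (κ₁ u)^2) _ t := (hdκ₃.pow 2).add (hdκ₁.pow 2)
      convert h using 1
      push_cast
      ring
    have hdsqrt : HasDerivAt (fun u => Real.sqrt ((κ₃ u)^2 + (κ₁ u)^2))
        ((2 * κ₃ t * deriv κ₃ t + 2 * κ₁ t * deriv κ₁ t) /
          (2 * Real.sqrt ((κ₃ t)^2 + (κ₁ t)^2))) t := hdq.sqrt hq.ne'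
    have hdinv : HasDerivAt (fun u => (Real.sqrt ((κ₃ u)^2 + (κ₁ u)^2))⁻¹)
        (-((2 * κ₃ t * deriv κ₃ t + 2 * κ₁ t * deriv κ₁ t) /
          (2 * Real.sqrt ((κ₃ t)^2 + (κ₁ t)^2))) /
          (Real.sqrt ((κ₃ t)^2 + (κ₁ t)^2))^2) t := hdsqrt.inv hs.ne'
    have hdv : HasDerivAt (fun u => κ₃ u • e u + κ₁ u • b u)
        ((κ₃ t • (κ₁ t • ν t + κ₂ t • b t) + deriv κ₃ t • e t) +
         (κ₁ t • (-(κ₂ t) • e t + -(κ₃ t) • ν t) + deriv κ₁ t • b t)) t :=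
      (hdκ₃.smul hde).add (hdκ₁.smul hdb)
    have hδ : HasDerivAt δν
        ((Real.sqrt ((κ₃ t)^2 + (κ₁ t)^2))⁻¹ •
          ((κ₃ t • (κ₁ t • ν t + κ₂ t • b t) + deriv κ₃ t • e t) +
           (κ₁ t • (-(κ₂ t) • e t + -(κ₃ t) • ν t) + deriv κ₁ t • b t)) +
         (-((2 * κ₃ t * deriv κ₃ t + 2 * κ₁ t * deriv κ₁ t) /
            (2 * Real.sqrt ((κ₃ t)^2 + (κ₁ t)^2))) /
            (Real.sqrt ((κ₃ t)^2 + (κ₁ t)^2))^2) •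
          (κ₃ t • e t + κ₁ t • b t)) t := by
      rw [hδν]
      exact hdinv.smul hdv
    rw [hδ.deriv, hβν, hw]
    have h32 : ((κ₃ t)^2 + (κ₁ t)^2) ^ ((3:ℝ)/2)
        = (Real.sqrt ((κ₃ t)^2 + (κ₁ t)^2))^3 := by
      rw [Real.sqrt_eq_rpow, ← Real.rpow_natCast (((κ₃ t)^2 + (κ₁ t)^2) ^ ((1:ℝ)/2)) 3,
        ← Real.rpow_mul hq.le]
      norm_num
    beta_reduce
    rw [h32]
    set s := Real.sqrt ((κ₃ t)^2 + (κ₁ t)^2) with hsdef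
    match_scalars
    · ring
    · field_simp
      linear_combination (κ₃ t * κ₂ t + deriv κ₁ t) * hs2
    · field_simp
      linear_combination (deriv κ₃ t - κ₁ t * κ₂ t) * hs2
  refine ⟨hd, fun t => ?_⟩
  rw [hd t]
  constructor
  · intro h
    rcases smul_eq_zero.1 h with h | h
    · exact h
    · exfalso
      have hq : 0 < (κ₃ t)^2 + (κ₁ t)^2 := by
        rcases (by
          by_contra h'
          push_neg at h'
          exact hne t (Prod.ext h'.1 h'.2) : κ₁ t ≠ 0 ∨ κ₃ t ≠ 0) with h' | h' <;> positivity
      have hbe : b t ⬝ᵥ e t = 0 := by rw [dotProduct_comm]; exact heb t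
      have hwdot : w t ⬝ᵥ w t =
          ((((κ₃ t)^2 + (κ₁ t)^2) ^ ((3:ℝ)/2))⁻¹)^2 * ((κ₁ t)^2 + (κ₃ t)^2) := by
        rw [hw]
        simp only [smul_dotProduct, dotProduct_smul,
          add_dotProduct, dotProduct_add, hee t, hbb t, heb t, hbe,
          smul_eq_mul]
        ring
      rw [h, zero_dotProduct] at hwdot
      have hpos : 0 < ((((κ₃ t)^2 + (κ₁ t)^2) ^ ((3:ℝ)/2))⁻¹)^2 * ((κ₁ t)^2 + (κ₃ t)^2) := by
        have h1 : 0 < ((κ₃ t)^2 + (κ₁ t)^2) ^ ((3:ℝ)/2) := Real.rpow_pos_of_pos hq _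
        have h2 : 0 < (κ₁ t)^2 + (κ₃ t)^2 := by linarith
        positivity
      linarith
  · intro h
    rw [h, zero_smul]
end

section
/- With frame equations e' = κ₁ν + κ₂b, ν' = -κ₁e + κ₃b, b' = -κ₂e - κ₃ν and (κ₂, κ₃) ≠ (0,0), the derivative of δ_b = (κ₃e - κ₂ν)/√(κ₃² + κ₂²) satisfies δ_b' = β_b · w, where β_b = κ₁κ₂² + κ₁κ₃² + κ₂κ₃' - κ₂'κ₃ and w = (κ₂e + κ₃ν)/(κ₃² + κ₂²)^{3/2}. In particular, δ_b' = 0 at t if and only if β_b(t) = 0. -/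
open Matrix Real

/-- `δ_b' = β_b · w` with
`β_b = κ₁κ₂² + κ₁κ₃² + κ₂κ₃' - κ₂'κ₃` and
`w = (κ₂ e + κ₃ ν)/(κ₃² + κ₂²)^{3/2}`; in particular `δ_b'(t) = 0 ↔ β_b(t) = 0`. -/
theorem deriv_delta_b
    (e ν b : ℝ → Fin 3 → ℝ) (κ₁ κ₂ κ₃ : ℝ → ℝ)
    (he : ContDiff ℝ (⊤ : ℕ∞) e) (hν : ContDiff ℝ (⊤ : ℕ∞) ν) (hb : ContDiff ℝ (⊤ : ℕ∞) b)
    (hκ₁ : ContDiff ℝ (⊤ : ℕ∞) κ₁) (hκ₂ : ContDiff ℝ (⊤ : ℕ∞) κ₂) (hκ₃ : ContDiff ℝ (⊤ : ℕ∞) κ₃)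
    (hee : ∀ t, e t ⬝ᵥ e t = 1) (hνν : ∀ t, ν t ⬝ᵥ ν t = 1)
    (hbb : ∀ t, b t ⬝ᵥ b t = 1)
    (heν : ∀ t, e t ⬝ᵥ ν t = 0) (heb : ∀ t, e t ⬝ᵥ b t = 0)
    (hνb : ∀ t, ν t ⬝ᵥ b t = 0)
    (hFe : ∀ t, deriv e t = κ₁ t • ν t + κ₂ t • b t)
    (hFν : ∀ t, deriv ν t = -(κ₁ t) • e t + κ₃ t • b t)
    (hFb : ∀ t, deriv b t = -(κ₂ t) • e t + -(κ₃ t) • ν t)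
    (hne : ∀ t, (κ₂ t, κ₃ t) ≠ (0, 0))
    (δb : ℝ → Fin 3 → ℝ) (βb : ℝ → ℝ) (w : ℝ → Fin 3 → ℝ)
    (hδb : δb = fun t => (Real.sqrt ((κ₃ t)^2 + (κ₂ t)^2))⁻¹ •
        (κ₃ t • e t + -(κ₂ t) • ν t))
    (hβb : βb = fun t => κ₁ t * (κ₂ t)^2 + κ₁ t * (κ₃ t)^2
        + κ₂ t * deriv κ₃ t - deriv κ₂ t * κ₃ t)
    (hw : w = fun t => (((κ₃ t)^2 + (κ₂ t)^2) ^ ((3:ℝ)/2))⁻¹ •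
        (κ₂ t • e t + κ₃ t • ν t)) :
    (∀ t, deriv δb t = βb t • w t) ∧ (∀ t, deriv δb t = 0 ↔ βb t = 0) := by
  have hr : ∀ t, (0:ℝ) < (κ₃ t)^2 + (κ₂ t)^2 := by
    intro t
    have h : κ₂ t ≠ 0 ∨ κ₃ t ≠ 0 := by
      by_contra hc
      push_neg at hc
      exact (hne t) (by simp [hc.1, hc.2])
    rcases h with h | h <;> positivity
  have key : ∀ t, deriv δb t = βb t • w t := by
    intro t
    have hrt := hr t
    have hst : (0:ℝ) < Real.sqrt ((κ₃ t)^2 + (κ₂ t)^2) := Real.sqrt_pos.mpr hrt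
    have hs2 : Real.sqrt ((κ₃ t)^2 + (κ₂ t)^2) ^ 2 = (κ₃ t)^2 + (κ₂ t)^2 :=
      Real.sq_sqrt hrt.le
    have hdκ₂ : HasDerivAt κ₂ (deriv κ₂ t) t :=
      ((hκ₂.differentiable (by simp)) t).hasDerivAt
    have hdκ₃ : HasDerivAt κ₃ (deriv κ₃ t) t :=
      ((hκ₃.differentiable (by simp)) t).hasDerivAt
    have hdr : HasDerivAt (fun t => (κ₃ t)^2 + (κ₂ t)^2)
        (2 * κ₃ t * deriv κ₃ t + 2 * κ₂ t * deriv κ₂ t) t := by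
      have := (hdκ₃.pow 2).add (hdκ₂.pow 2)
      exact (by simpa [pow_one, mul_comm, mul_assoc] using this :
        HasDerivAt (κ₃ ^ 2 + κ₂ ^ 2) (2 * κ₃ t * deriv κ₃ t + 2 * κ₂ t * deriv κ₂ t) t)
    have hds := (Real.hasDerivAt_sqrt (ne_of_gt hrt)).comp t hdr
    have hdc := hds.inv (ne_of_gt hst)
    have hde : HasDerivAt e (κ₁ t • ν t + κ₂ t • b t) t := by
      have := ((he.differentiable (by simp)) t).hasDerivAt
      rwa [hFe t] at this
    have hdν : HasDerivAt ν (-(κ₁ t) • e t + κ₃ t • b t) t := by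
      have := ((hν.differentiable (by simp)) t).hasDerivAt
      rwa [hFν t] at this
    have hdv := (hdκ₃.smul hde).add (hdκ₂.neg.smul hdν)
    have hdδ : HasDerivAt δb _ t := (hdc.smul hdv).congr_of_eventuallyEq
      (by rw [hδb]; exact Filter.Eventually.of_forall (fun _ => rfl))
    rw [hdδ.deriv]
    simp only [Pi.inv_apply, Function.comp_apply, Pi.add_apply, Pi.neg_apply, Pi.smul_apply']
    simp only [hβb, hw]
    have hr32 : ((κ₃ t)^2 + (κ₂ t)^2) ^ ((3:ℝ)/2)
        = ((κ₃ t)^2 + (κ₂ t)^2) * Real.sqrt ((κ₃ t)^2 + (κ₂ t)^2) := by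
      rw [show ((3:ℝ)/2) = 1 + 1/2 by norm_num, Real.rpow_add hrt, Real.rpow_one,
        ← Real.sqrt_eq_rpow]
    rw [hr32]
    match_scalars
    · field_simp
      ring_nf
      simp only [hs2]
      ring
    · field_simp
      ring_nf
    · field_simp
      ring_nf
      simp only [hs2]
      ring
  refine ⟨key, fun t => ?_⟩
  rw [key t]
  constructor
  · intro h
    rcases smul_eq_zero.mp h with h' | h'
    · exact h'
    · exfalso
      have hu : (κ₂ t • e t + κ₃ t • ν t) ≠ 0 := by
        intro h0
        have hdot : (κ₂ t • e t + κ₃ t • ν t) ⬝ᵥ (κ₂ t • e t + κ₃ t • ν t)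
            = (κ₂ t)^2 + (κ₃ t)^2 := by
          simp [add_dotProduct, dotProduct_add, smul_dotProduct, dotProduct_smul,
            hee t, hνν t, heν t, dotProduct_comm (ν t) (e t), smul_eq_mul]
          ring
        rw [h0] at hdot
        simp at hdot
        nlinarith [hr t]
      rw [hw] at h'
      simp only at h'
      rcases smul_eq_zero.mp h' with h'' | h''
      · exact (inv_ne_zero (ne_of_gt (Real.rpow_pos_of_pos (hr t) _))) h''
      · exact hu h''
  · intro h; rw [h, zero_smul]
end

section
/- Let γ̃' = l·e and let {e, ν, b} satisfy the Frenet–Serret type formulas with coefficients κ₁, κ₂, κ₃. Assume (κ₁, κ₃) ≠ (0,0) and β_ν = κ₁²κ₂ + κ₂κ₃² + κ₁'κ₃ - κ₁κ₃' ≠ 0 on I. Define s(t) = l κ₁ √(κ₃² + κ₁²) / β_ν and σ̂_ν(t) = γ̃(t) + s(t)δ_ν(t) with δ_ν = (κ₃e + κ₁b)/√(κ₃² + κ₁²). Then σ̂_ν'(t) = (ρ_ν / β_ν²)(κ₃e + κ₁b), where ρ_ν = l(β_ν(κ₂κ₃ + 2κ₁') - β_ν'κ₁) + l'κ₁β_ν.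 -/
open Matrix Real
open scoped ContDiff

/-- the striction curve `σ̂_ν = γ̃ + s δ_ν` of the developable
`S_ν` satisfies `σ̂_ν' = (ρ_ν/β_ν²)(κ₃ e + κ₁ b)`. -/
theorem striction_deriv_nu
    (e ν b : ℝ → Fin 3 → ℝ) (κ₁ κ₂ κ₃ l : ℝ → ℝ) (γ : ℝ → Fin 3 → ℝ)
    (he : ContDiff ℝ (⊤ : ℕ∞) e) (hν : ContDiff ℝ (⊤ : ℕ∞) ν) (hb : ContDiff ℝ (⊤ : ℕ∞) b)
    (hκ₁ : ContDiff ℝ (⊤ : ℕ∞) κ₁) (hκ₂ : ContDiff ℝ (⊤ : ℕ∞) κ₂) (hκ₃ : ContDiff ℝ (⊤ : ℕ∞) κ₃)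
    (hl : ContDiff ℝ (⊤ : ℕ∞) l) (hγ : ContDiff ℝ (⊤ : ℕ∞) γ)
    (hee : ∀ t, e t ⬝ᵥ e t = 1) (hνν : ∀ t, ν t ⬝ᵥ ν t = 1)
    (hbb : ∀ t, b t ⬝ᵥ b t = 1)
    (heν : ∀ t, e t ⬝ᵥ ν t = 0) (heb : ∀ t, e t ⬝ᵥ b t = 0)
    (hνb : ∀ t, ν t ⬝ᵥ b t = 0)
    (hFe : ∀ t, deriv e t = κ₁ t • ν t + κ₂ t • b t)
    (hFν : ∀ t, deriv ν t = -(κ₁ t) • e t + κ₃ t • b t)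
    (hFb : ∀ t, deriv b t = -(κ₂ t) • e t + -(κ₃ t) • ν t)
    (hγ' : ∀ t, deriv γ t = l t • e t)
    (hne : ∀ t, (κ₁ t, κ₃ t) ≠ (0, 0))
    (δν : ℝ → Fin 3 → ℝ) (βν ρν s : ℝ → ℝ) (σ : ℝ → Fin 3 → ℝ)
    (hδν : δν = fun t => (Real.sqrt ((κ₃ t)^2 + (κ₁ t)^2))⁻¹ •
        (κ₃ t • e t + κ₁ t • b t))
    (hβν : βν = fun t => (κ₁ t)^2 * κ₂ t + κ₂ t * (κ₃ t)^2
        + deriv κ₁ t * κ₃ t - κ₁ t * deriv κ₃ t)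
    (hβne : ∀ t, βν t ≠ 0)
    (hρν : ρν = fun t => l t * (βν t * (κ₂ t * κ₃ t + 2 * deriv κ₁ t)
        - deriv βν t * κ₁ t) + deriv l t * κ₁ t * βν t)
    (hs : s = fun t => l t * κ₁ t * Real.sqrt ((κ₃ t)^2 + (κ₁ t)^2) / βν t)
    (hσ : σ = fun t => γ t + s t • δν t) :
    ∀ t, deriv σ t = (ρν t / (βν t)^2) • (κ₃ t • e t + κ₁ t • b t) := by
  -- positivity of κ₃² + κ₁²
  have hQ : ∀ u, 0 < (κ₃ u)^2 + (κ₁ u)^2 := by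
    intro u
    have h : κ₁ u ≠ 0 ∨ κ₃ u ≠ 0 := by
      by_contra h
      push_neg at h
      exact hne u (by simp [h.1, h.2])
    rcases h with h | h
    · have : 0 < (κ₁ u)^2 := by positivity
      nlinarith [sq_nonneg (κ₃ u)]
    · have : 0 < (κ₃ u)^2 := by positivity
      nlinarith [sq_nonneg (κ₁ u)]
  have hsq : ∀ u, Real.sqrt ((κ₃ u)^2 + (κ₁ u)^2) ≠ 0 := fun u =>
    ne_of_gt (Real.sqrt_pos.mpr (hQ u))
  -- simplify σ
  have hσ' : σ = fun u => γ u + (l u * κ₁ u / βν u) • (κ₃ u • e u + κ₁ u • b u) := by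
    funext u
    rw [hσ, hs, hδν]
    simp only
    rw [smul_smul, div_mul_eq_mul_div, mul_assoc (l u * κ₁ u), mul_inv_cancel₀ (hsq u),
      mul_one]
  -- differentiability facts
  have hκ₁' : ContDiff ℝ ∞ κ₁ := hκ₁.of_le (by simp)
  have hκ₂' : ContDiff ℝ ∞ κ₂ := hκ₂.of_le (by simp)
  have hκ₃' : ContDiff ℝ ∞ κ₃ := hκ₃.of_le (by simp)
  have hl' : ContDiff ℝ ∞ l := hl.of_le (by simp)
  have hdκ₁ : ContDiff ℝ ∞ (deriv κ₁) := (contDiff_infty_iff_deriv.mp hκ₁').2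
  have hdκ₃ : ContDiff ℝ ∞ (deriv κ₃) := (contDiff_infty_iff_deriv.mp hκ₃').2
  have hβC : ContDiff ℝ ∞ βν := by
    rw [hβν]
    exact ((((hκ₁'.pow 2).mul hκ₂').add (hκ₂'.mul (hκ₃'.pow 2))).add
      (hdκ₁.mul hκ₃')).sub (hκ₁'.mul hdκ₃)
  have hfC : ContDiff ℝ ∞ (fun u => l u * κ₁ u / βν u) :=
    (hl'.mul hκ₁').div hβC hβne
  intro t
  have hBt : βν t = (κ₁ t)^2 * κ₂ t + κ₂ t * (κ₃ t)^2
      + deriv κ₁ t * κ₃ t - deriv κ₃ t * κ₁ t := by rw [hβν]; ring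
  have hρt : ρν t = l t * (βν t * (κ₂ t * κ₃ t + 2 * deriv κ₁ t)
      - deriv βν t * κ₁ t) + deriv l t * κ₁ t * βν t := by rw [hρν]
  -- differentiability at t
  have dγ : DifferentiableAt ℝ γ t := hγ.differentiable (by simp) t
  have de : DifferentiableAt ℝ e t := he.differentiable (by simp) t
  have db : DifferentiableAt ℝ b t := hb.differentiable (by simp) t
  have dκ₁ : DifferentiableAt ℝ κ₁ t := hκ₁.differentiable (by simp) t
  have dκ₃ : DifferentiableAt ℝ κ₃ t := hκ₃.differentiable (by simp) t
  have dl : DifferentiableAt ℝ l t := hl.differentiable (by simp) t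
  have hle : (1 : WithTop ℕ∞) ≤ ∞ := by exact_mod_cast le_top
  have dβ : DifferentiableAt ℝ βν t := hβC.differentiable (by simp) t
  have df : DifferentiableAt ℝ (fun u => l u * κ₁ u / βν u) t :=
    hfC.differentiable (by simp) t
  have dw : DifferentiableAt ℝ (fun u => κ₃ u • e u + κ₁ u • b u) t :=
    (dκ₃.smul de).add (dκ₁.smul db)
  -- compute the derivatives
  have hwd : deriv (fun u => κ₃ u • e u + κ₁ u • b u) t
      = (κ₃ t • deriv e t + deriv κ₃ t • e t)
        + (κ₁ t • deriv b t + deriv κ₁ t • b t) := by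
    rw [deriv_fun_add (dκ₃.fun_smul de) (dκ₁.fun_smul db), deriv_fun_smul dκ₃ de, deriv_fun_smul dκ₁ db]
  have hfd : deriv (fun u => l u * κ₁ u / βν u) t
      = ((deriv l t * κ₁ t + l t * deriv κ₁ t) * βν t
          - l t * κ₁ t * deriv βν t) / (βν t)^2 := by
    rw [deriv_fun_div (dl.fun_mul dκ₁) dβ (hβne t), deriv_fun_mul dl dκ₁]
  have hσd : deriv σ t
      = deriv γ t + (deriv (fun u => l u * κ₁ u / βν u) t • (κ₃ t • e t + κ₁ t • b t)
        + (l t * κ₁ t / βν t) • deriv (fun u => κ₃ u • e u + κ₁ u • b u) t) := by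
    rw [hσ']
    rw [deriv_fun_add dγ (df.fun_smul dw), deriv_fun_smul df dw]
    module
  rw [hσd, hfd, hwd, hγ' t, hFe t, hFb t, hρt]
  have hb0 := hβne t
  match_scalars
  · field_simp [hb0]
    rw [hBt]
    ring
  · rw [div_mul_eq_mul_div, div_mul_eq_mul_div, div_mul_eq_mul_div,
      div_add_div _ _ (pow_ne_zero 2 hb0) hb0,
      div_eq_div_iff (mul_ne_zero (pow_ne_zero 2 hb0) hb0) (pow_ne_zero 2 hb0)]
    ring
  · ring
end

section
/- Under the assumptions of the previous setting (γ̃' = l·e, Frenet–Serret type frame, (κ₁,κ₃) ≠ (0,0), β_ν ≠ 0 on I), the striction curve σ̂_ν(t) = γ̃(t) + s(t)δ_ν(t) with s = lκ₁√(κ₃²+κ₁²)/β_ν is constant (i.e., the developable surface S_ν is a cone) if and only if ρ_ν = l(β_ν(κ₂κ₃ + 2κ₁') - β_ν'κ₁) + l'κ₁β_ν vanishes identically on I. -/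
open Matrix Real
open scoped ContDiff

/-- the striction curve `σ̂_ν = γ̃ + s δ_ν` is constant
(i.e. `S_ν` is a cone) if and only if `ρ_ν ≡ 0`. -/
theorem cone_iff_rho_nu_zero
    (e ν b : ℝ → Fin 3 → ℝ) (κ₁ κ₂ κ₃ l : ℝ → ℝ) (γ : ℝ → Fin 3 → ℝ)
    (he : ContDiff ℝ (⊤ : ℕ∞) e) (hν : ContDiff ℝ (⊤ : ℕ∞) ν) (hb : ContDiff ℝ (⊤ : ℕ∞) b)
    (hκ₁ : ContDiff ℝ (⊤ : ℕ∞) κ₁) (hκ₂ : ContDiff ℝ (⊤ : ℕ∞) κ₂) (hκ₃ : ContDiff ℝ (⊤ : ℕ∞) κ₃)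
    (hl : ContDiff ℝ (⊤ : ℕ∞) l) (hγ : ContDiff ℝ (⊤ : ℕ∞) γ)
    (hee : ∀ t, e t ⬝ᵥ e t = 1) (hνν : ∀ t, ν t ⬝ᵥ ν t = 1)
    (hbb : ∀ t, b t ⬝ᵥ b t = 1)
    (heν : ∀ t, e t ⬝ᵥ ν t = 0) (heb : ∀ t, e t ⬝ᵥ b t = 0)
    (hνb : ∀ t, ν t ⬝ᵥ b t = 0)
    (hFe : ∀ t, deriv e t = κ₁ t • ν t + κ₂ t • b t)
    (hFν : ∀ t, deriv ν t = -(κ₁ t) • e t + κ₃ t • b t)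
    (hFb : ∀ t, deriv b t = -(κ₂ t) • e t + -(κ₃ t) • ν t)
    (hγ' : ∀ t, deriv γ t = l t • e t)
    (hne : ∀ t, (κ₁ t, κ₃ t) ≠ (0, 0))
    (δν : ℝ → Fin 3 → ℝ) (βν ρν s : ℝ → ℝ) (σ : ℝ → Fin 3 → ℝ)
    (hδν : δν = fun t => (Real.sqrt ((κ₃ t)^2 + (κ₁ t)^2))⁻¹ •
        (κ₃ t • e t + κ₁ t • b t))
    (hβν : βν = fun t => (κ₁ t)^2 * κ₂ t + κ₂ t * (κ₃ t)^2
        + deriv κ₁ t * κ₃ t - κ₁ t * deriv κ₃ t)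
    (hβne : ∀ t, βν t ≠ 0)
    (hρν : ρν = fun t => l t * (βν t * (κ₂ t * κ₃ t + 2 * deriv κ₁ t)
        - deriv βν t * κ₁ t) + deriv l t * κ₁ t * βν t)
    (hs : s = fun t => l t * κ₁ t * Real.sqrt ((κ₃ t)^2 + (κ₁ t)^2) / βν t)
    (hσ : σ = fun t => γ t + s t • δν t) :
    (∃ p : Fin 3 → ℝ, ∀ t, σ t = p) ↔ (∀ t, ρν t = 0) := by
  -- positivity of κ₃² + κ₁²
  have hwpos : ∀ t, 0 < (κ₃ t)^2 + (κ₁ t)^2 := by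
    intro t
    rcases lt_or_eq_of_le (add_nonneg (sq_nonneg (κ₃ t)) (sq_nonneg (κ₁ t))) with h | h
    · exact h
    · exfalso
      have h3 : κ₃ t = 0 := by nlinarith [sq_nonneg (κ₃ t), sq_nonneg (κ₁ t)]
      have h1 : κ₁ t = 0 := by nlinarith [sq_nonneg (κ₃ t), sq_nonneg (κ₁ t)]
      exact hne t (by rw [h1, h3])
  have hβt : ∀ t, βν t = (κ₁ t)^2 * κ₂ t + κ₂ t * (κ₃ t)^2
      + deriv κ₁ t * κ₃ t - κ₁ t * deriv κ₃ t := fun t => by rw [hβν]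
  have hρt : ∀ t, ρν t = l t * (βν t * (κ₂ t * κ₃ t + 2 * deriv κ₁ t)
      - deriv βν t * κ₁ t) + deriv l t * κ₁ t * βν t := fun t => by rw [hρν]
  -- smoothness / differentiability
  have hκ₁d : ContDiff ℝ ∞ (deriv κ₁) :=
    (contDiff_infty_iff_deriv.mp (hκ₁.of_le (by simp))).2
  have hκ₃d : ContDiff ℝ ∞ (deriv κ₃) :=
    (contDiff_infty_iff_deriv.mp (hκ₃.of_le (by simp))).2
  have hκ₁i : ContDiff ℝ ∞ κ₁ := hκ₁.of_le (by simp)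
  have hκ₂i : ContDiff ℝ ∞ κ₂ := hκ₂.of_le (by simp)
  have hκ₃i : ContDiff ℝ ∞ κ₃ := hκ₃.of_le (by simp)
  have hβsm : ContDiff ℝ ∞ βν := by
    rw [hβν]
    exact (((hκ₁i.pow 2).mul hκ₂i).add (hκ₂i.mul (hκ₃i.pow 2))).add (hκ₁d.mul hκ₃i)
      |>.sub (hκ₁i.mul hκ₃d)
  have hDl := hl.differentiable (by simp)
  have hDκ₁ := hκ₁.differentiable (by simp)
  have hDκ₃ := hκ₃.differentiable (by simp)
  have hDe := he.differentiable (by simp)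
  have hDb := hb.differentiable (by simp)
  have hDγ := hγ.differentiable (by simp)
  have hDβ : Differentiable ℝ βν := hβsm.differentiable (by simp)
  -- rewrite σ without the square root
  have hσ2 : σ = fun t => γ t + (l t * κ₁ t / βν t) • (κ₃ t • e t + κ₁ t • b t) := by
    rw [hσ, hδν, hs]
    funext t
    simp only
    have hw : Real.sqrt ((κ₃ t)^2 + (κ₁ t)^2) ≠ 0 :=
      (Real.sqrt_pos.mpr (hwpos t)).ne'
    have hβ := hβne t
    match_scalars <;> field_simp <;> ring
  -- differentiability pieces
  have hf_diff : ∀ t, DifferentiableAt ℝ (fun t => l t * κ₁ t / βν t) t :=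
    fun t => ((hDl t).mul (hDκ₁ t)).div (hDβ t) (hβne t)
  have hu_diff : ∀ t, DifferentiableAt ℝ (fun t => κ₃ t • e t + κ₁ t • b t) t :=
    fun t => ((hDκ₃ t).smul (hDe t)).add ((hDκ₁ t).smul (hDb t))
  have hDσ : Differentiable ℝ σ := by
    rw [hσ2]
    exact fun t => (hDγ t).add ((hf_diff t).smul (hu_diff t))
  -- the key derivative computation
  have key : ∀ t, deriv σ t
      = (ρν t / (βν t)^2) • (κ₃ t • e t + κ₁ t • b t) := by
    intro t
    rw [hσ2]
    rw [deriv_fun_add (g := fun t => (l t * κ₁ t / βν t) • (κ₃ t • e t + κ₁ t • b t)) (hDγ t) ((hf_diff t).smul (hu_diff t)),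
      deriv_fun_smul (hf_diff t) (hu_diff t),
      deriv_fun_div (c := fun t => l t * κ₁ t) ((hDl t).mul (hDκ₁ t)) (hDβ t) (hβne t),
      deriv_fun_mul (hDl t) (hDκ₁ t),
      deriv_fun_add (f := fun t => κ₃ t • e t) (g := fun t => κ₁ t • b t) ((hDκ₃ t).smul (hDe t)) ((hDκ₁ t).smul (hDb t)),
      deriv_fun_smul (hDκ₃ t) (hDe t), deriv_fun_smul (hDκ₁ t) (hDb t),
      hγ' t, hFe t, hFb t, hρt t]
    have hβ := hβne t
    match_scalars
    · field_simp
      rw [hβt t]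
      ring
    · field_simp
      ring
    · field_simp
      rw [hβt t]
      ring
  constructor
  · rintro ⟨p, hp⟩ t
    have hc : σ = fun _ => p := funext hp
    have h0 : deriv σ t = 0 := by rw [hc]; simp
    rw [key t] at h0
    rcases smul_eq_zero.mp h0 with h | h
    · rcases div_eq_zero_iff.mp h with h' | h'
      · exact h'
      · exact absurd h' (pow_ne_zero 2 (hβne t))
    · exfalso
      have h3 : κ₃ t = 0 := by
        have := congrArg (fun v => v ⬝ᵥ e t) h
        simpa [add_dotProduct, smul_dotProduct, hee t,
          dotProduct_comm (b t) (e t), heb t] using this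
      have h1 : κ₁ t = 0 := by
        have := congrArg (fun v => v ⬝ᵥ b t) h
        simpa [add_dotProduct, smul_dotProduct, hbb t,
          dotProduct_comm, heb t] using this
      exact hne t (by rw [h1, h3])
  · intro h
    refine ⟨σ 0, fun t => ?_⟩
    exact is_const_of_deriv_eq_zero hDσ (fun x => by rw [key x, h x]; simp) t 0
end

section
/- Let γ̃' = l·e with frame {e, ν, b} satisfying the Frenet–Serret type formulas, assume (κ₂, κ₃) ≠ (0,0) and β_b = κ₁κ₂² + κ₁κ₃² + κ₂κ₃' - κ₂'κ₃ ≠ 0 on I. Define s(t) = -l κ₂ √(κ₃² + κ₂²) / β_b and σ̂_b(t) = γ̃(t) + s(t)δ_b(t) with δ_b = (κ₃e - κ₂ν)/√(κ₃² + κ₂²). Then σ̂_b'(t) = (ρ_b / β_b²)(κ₃e - κ₂ν), where ρ_b = l(β_b(κ₁κ₃ - 2κ₂') + β_b'κ₂) - l'κ₂β_b. -/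
set_option maxHeartbeats 1000000


open Matrix Real

/-- the striction curve `σ̂_b = γ̃ + s δ_b` of the developable
`S_b` satisfies `σ̂_b' = (ρ_b/β_b²)(κ₃ e - κ₂ ν)`. -/
theorem striction_deriv_b
    (e ν b : ℝ → Fin 3 → ℝ) (κ₁ κ₂ κ₃ l : ℝ → ℝ) (γ : ℝ → Fin 3 → ℝ)
    (he : ContDiff ℝ (⊤ : ℕ∞) e) (hν : ContDiff ℝ (⊤ : ℕ∞) ν) (hb : ContDiff ℝ (⊤ : ℕ∞) b)
    (hκ₁ : ContDiff ℝ (⊤ : ℕ∞) κ₁) (hκ₂ : ContDiff ℝ (⊤ : ℕ∞) κ₂) (hκ₃ : ContDiff ℝ (⊤ : ℕ∞) κ₃)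
    (hl : ContDiff ℝ (⊤ : ℕ∞) l) (hγ : ContDiff ℝ (⊤ : ℕ∞) γ)
    (hee : ∀ t, e t ⬝ᵥ e t = 1) (hνν : ∀ t, ν t ⬝ᵥ ν t = 1)
    (hbb : ∀ t, b t ⬝ᵥ b t = 1)
    (heν : ∀ t, e t ⬝ᵥ ν t = 0) (heb : ∀ t, e t ⬝ᵥ b t = 0)
    (hνb : ∀ t, ν t ⬝ᵥ b t = 0)
    (hFe : ∀ t, deriv e t = κ₁ t • ν t + κ₂ t • b t)
    (hFν : ∀ t, deriv ν t = -(κ₁ t) • e t + κ₃ t • b t)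
    (hFb : ∀ t, deriv b t = -(κ₂ t) • e t + -(κ₃ t) • ν t)
    (hγ' : ∀ t, deriv γ t = l t • e t)
    (hne : ∀ t, (κ₂ t, κ₃ t) ≠ (0, 0))
    (δb : ℝ → Fin 3 → ℝ) (βb ρb s : ℝ → ℝ) (σ : ℝ → Fin 3 → ℝ)
    (hδb : δb = fun t => (Real.sqrt ((κ₃ t)^2 + (κ₂ t)^2))⁻¹ •
        (κ₃ t • e t + -(κ₂ t) • ν t))
    (hβb : βb = fun t => κ₁ t * (κ₂ t)^2 + κ₁ t * (κ₃ t)^2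
        + κ₂ t * deriv κ₃ t - deriv κ₂ t * κ₃ t)
    (hβne : ∀ t, βb t ≠ 0)
    (hρb : ρb = fun t => l t * (βb t * (κ₁ t * κ₃ t - 2 * deriv κ₂ t)
        + deriv βb t * κ₂ t) - deriv l t * κ₂ t * βb t)
    (hs : s = fun t => -(l t * κ₂ t * Real.sqrt ((κ₃ t)^2 + (κ₂ t)^2)) / βb t)
    (hσ : σ = fun t => γ t + s t • δb t) :
    ∀ t, deriv σ t = (ρb t / (βb t)^2) • (κ₃ t • e t + -(κ₂ t) • ν t) := by
  intro t
  have hd2 : ContDiff ℝ (((⊤ : ℕ∞) : WithTop ℕ∞)) (deriv κ₂) :=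
    (contDiff_infty_iff_deriv.mp (hκ₂.of_le (by simp))).2
  have hd3 : ContDiff ℝ (((⊤ : ℕ∞) : WithTop ℕ∞)) (deriv κ₃) :=
    (contDiff_infty_iff_deriv.mp (hκ₃.of_le (by simp))).2
  have hβc : ContDiff ℝ (((⊤ : ℕ∞) : WithTop ℕ∞)) βb := by
    rw [hβb]
    exact ((((hκ₁.of_le (by simp)).mul ((hκ₂.of_le (by simp)).pow 2)).add
      ((hκ₁.of_le (by simp)).mul ((hκ₃.of_le (by simp)).pow 2))).add
      ((hκ₂.of_le (by simp)).mul hd3)).sub (hd2.mul (hκ₃.of_le (by simp)))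
  -- rewrite σ without the square root
  have hσ2 : σ = fun u => γ u + (-(l u * κ₂ u) / βb u) •
      (κ₃ u • e u + -(κ₂ u) • ν u) := by
    rw [hσ, hδb, hs]
    funext u
    have h23 : κ₂ u ≠ 0 ∨ κ₃ u ≠ 0 := by
      by_contra h
      push_neg at h
      exact hne u (by simp [h.1, h.2])
    have hpos : (0:ℝ) < (κ₃ u)^2 + (κ₂ u)^2 := by
      rcases h23 with h | h <;> positivity
    have hsq : Real.sqrt ((κ₃ u)^2 + (κ₂ u)^2) ≠ 0 :=
      (Real.sqrt_pos.mpr hpos).ne'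
    have hsq2 : Real.sqrt ((κ₂ u)^2 + (κ₃ u)^2) ≠ 0 := by rwa [add_comm]
    simp only [smul_smul]
    congr 2
    rw [div_mul_eq_mul_div, neg_mul, mul_inv_cancel_right₀ hsq]
  -- derivative facts
  have hl' : HasDerivAt l (deriv l t) t := (hl.differentiable (by simp) t).hasDerivAt
  have hκ₂' : HasDerivAt κ₂ (deriv κ₂ t) t := (hκ₂.differentiable (by simp) t).hasDerivAt
  have hκ₃' : HasDerivAt κ₃ (deriv κ₃ t) t := (hκ₃.differentiable (by simp) t).hasDerivAt
  have hβ' : HasDerivAt βb (deriv βb t) t := (hβc.differentiable (by norm_num) t).hasDerivAt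
  have he' : HasDerivAt e (κ₁ t • ν t + κ₂ t • b t) t := by
    have := (he.differentiable (by simp) t).hasDerivAt
    rwa [hFe t] at this
  have hν' : HasDerivAt ν (-(κ₁ t) • e t + κ₃ t • b t) t := by
    have := (hν.differentiable (by simp) t).hasDerivAt
    rwa [hFν t] at this
  have hγ'' : HasDerivAt γ (l t • e t) t := by
    have := (hγ.differentiable (by simp) t).hasDerivAt
    rwa [hγ' t] at this
  have hf : HasDerivAt (fun u => -(l u * κ₂ u) / βb u)
      ((-(deriv l t * κ₂ t + l t * deriv κ₂ t) * βb t
        - -(l t * κ₂ t) * deriv βb t) / (βb t)^2) t :=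
    ((hl'.mul hκ₂').neg).div hβ' (hβne t)
  have hw : HasDerivAt (fun u => κ₃ u • e u + -(κ₂ u) • ν u)
      ((κ₃ t • (κ₁ t • ν t + κ₂ t • b t) + deriv κ₃ t • e t)
        + (-(κ₂ t) • (-(κ₁ t) • e t + κ₃ t • b t) + -(deriv κ₂ t) • ν t)) t :=
    (hκ₃'.smul he').add ((hκ₂'.neg).smul hν')
  have hσ' : HasDerivAt σ (l t • e t +
      ((-(l t * κ₂ t) / βb t) •
        ((κ₃ t • (κ₁ t • ν t + κ₂ t • b t) + deriv κ₃ t • e t)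
          + (-(κ₂ t) • (-(κ₁ t) • e t + κ₃ t • b t) + -(deriv κ₂ t) • ν t))
       + ((-(deriv l t * κ₂ t + l t * deriv κ₂ t) * βb t
            - -(l t * κ₂ t) * deriv βb t) / (βb t)^2) •
          (κ₃ t • e t + -(κ₂ t) • ν t))) t := by
    rw [hσ2]
    exact hγ''.add (hf.smul hw)
  rw [hσ'.deriv, hρb]
  have hB : βb t = κ₁ t * (κ₂ t)^2 + κ₁ t * (κ₃ t)^2
      + κ₂ t * deriv κ₃ t - deriv κ₂ t * κ₃ t := by rw [hβb]
  have hBne := hβne t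
  match_scalars
  · field_simp
    linear_combination (l t * βb t) * hB
  · field_simp
    ring
  · ring
end

section
/- Let S_ν(t,a) = γ̃(t) + a·δ_ν(t) with δ_ν = (κ₃e + κ₁b)/√(κ₃² + κ₁²), where γ̃' = l·e and {e,ν,b} satisfies the Frenet–Serret type formulas, and (κ₁,κ₃) ≠ (0,0). Then ν(t)·∂S_ν/∂t(t,a) = 0 and ν(t)·∂S_ν/∂a(t,a) = 0 for all (t,a); i.e., ν is a unit normal vector of the frontal S_ν. -/
open Matrix Real

/-- `ν` is a unit normal of the ruled surface
`S_ν(t,a) = γ̃(t) + a δ_ν(t)`, i.e. `ν · ∂S_ν/∂t = ν · ∂S_ν/∂a = 0`. -/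
theorem nu_normal_of_S_nu
    (e ν b : ℝ → Fin 3 → ℝ) (κ₁ κ₂ κ₃ l : ℝ → ℝ) (γ : ℝ → Fin 3 → ℝ)
    (he : ContDiff ℝ (⊤ : ℕ∞) e) (hν : ContDiff ℝ (⊤ : ℕ∞) ν) (hb : ContDiff ℝ (⊤ : ℕ∞) b)
    (hκ₁ : ContDiff ℝ (⊤ : ℕ∞) κ₁) (hκ₂ : ContDiff ℝ (⊤ : ℕ∞) κ₂) (hκ₃ : ContDiff ℝ (⊤ : ℕ∞) κ₃)
    (hl : ContDiff ℝ (⊤ : ℕ∞) l) (hγ : ContDiff ℝ (⊤ : ℕ∞) γ)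
    (hee : ∀ t, e t ⬝ᵥ e t = 1) (hνν : ∀ t, ν t ⬝ᵥ ν t = 1)
    (hbb : ∀ t, b t ⬝ᵥ b t = 1)
    (heν : ∀ t, e t ⬝ᵥ ν t = 0) (heb : ∀ t, e t ⬝ᵥ b t = 0)
    (hνb : ∀ t, ν t ⬝ᵥ b t = 0)
    (hFe : ∀ t, deriv e t = κ₁ t • ν t + κ₂ t • b t)
    (hFν : ∀ t, deriv ν t = -(κ₁ t) • e t + κ₃ t • b t)
    (hFb : ∀ t, deriv b t = -(κ₂ t) • e t + -(κ₃ t) • ν t)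
    (hγ' : ∀ t, deriv γ t = l t • e t)
    (hne : ∀ t, (κ₁ t, κ₃ t) ≠ (0, 0))
    (S : ℝ → ℝ → Fin 3 → ℝ)
    (hS : S = fun t a => γ t + (a * (Real.sqrt ((κ₃ t)^2 + (κ₁ t)^2))⁻¹) •
        (κ₃ t • e t + κ₁ t • b t)) :
    ∀ t a : ℝ, ν t ⬝ᵥ deriv (fun u => S u a) t = 0
      ∧ ν t ⬝ᵥ deriv (fun x => S t x) a = 0 := by
  intro t a
  subst hS
  have hde : Differentiable ℝ e := he.differentiable (by simp)
  have hdb : Differentiable ℝ b := hb.differentiable (by simp)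
  have hdγ : Differentiable ℝ γ := hγ.differentiable (by simp)
  have hdκ₁ : Differentiable ℝ κ₁ := hκ₁.differentiable (by simp)
  have hdκ₃ : Differentiable ℝ κ₃ := hκ₃.differentiable (by simp)
  have hpos : 0 < (κ₃ t)^2 + (κ₁ t)^2 := by
    have h := hne t
    rcases eq_or_ne (κ₃ t) 0 with h3 | h3
    · have h1 : κ₁ t ≠ 0 := fun h1 => h (by simp [h1, h3])
      positivity
    · positivity
  have hsq : DifferentiableAt ℝ (fun u => Real.sqrt ((κ₃ u)^2 + (κ₁ u)^2)) t :=
    DifferentiableAt.sqrt (by fun_prop) (ne_of_gt hpos)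
  have hsqne : Real.sqrt ((κ₃ t)^2 + (κ₁ t)^2) ≠ 0 :=
    ne_of_gt (Real.sqrt_pos.mpr hpos)
  have hf : DifferentiableAt ℝ (fun u => a * (Real.sqrt ((κ₃ u)^2 + (κ₁ u)^2))⁻¹) t :=
    ((hsq.inv hsqne).const_mul a)
  have hg : DifferentiableAt ℝ (fun u => κ₃ u • e u + κ₁ u • b u) t :=
    (((hdκ₃ t).smul (hde t)).add ((hdκ₁ t).smul (hdb t)))
  constructor
  · have hd : deriv (fun u => γ u + (a * (Real.sqrt ((κ₃ u)^2 + (κ₁ u)^2))⁻¹) •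
        (κ₃ u • e u + κ₁ u • b u)) t
        = deriv γ t + ((a * (Real.sqrt ((κ₃ t)^2 + (κ₁ t)^2))⁻¹) •
            (deriv (fun u => κ₃ u • e u) t + deriv (fun u => κ₁ u • b u) t)
          + deriv (fun u => a * (Real.sqrt ((κ₃ u)^2 + (κ₁ u)^2))⁻¹) t •
            (κ₃ t • e t + κ₁ t • b t)) := by
      rw [deriv_fun_add (hdγ t) (hf.fun_smul hg), deriv_fun_smul hf hg,
        deriv_fun_add ((hdκ₃ t).fun_smul (hde t)) ((hdκ₁ t).fun_smul (hdb t))]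
    rw [hd, deriv_fun_smul (hdκ₃ t) (hde t), deriv_fun_smul (hdκ₁ t) (hdb t),
      hγ', hFe, hFb]
    have h1 : ν t ⬝ᵥ e t = 0 := by rw [dotProduct_comm]; exact heν t
    have h2 : ν t ⬝ᵥ b t = 0 := hνb t
    simp [dotProduct_add, dotProduct_smul, h1, h2, hνν, smul_eq_mul]
    ring
  · have hd : deriv (fun x => γ t + (x * (Real.sqrt ((κ₃ t)^2 + (κ₁ t)^2))⁻¹) •
        (κ₃ t • e t + κ₁ t • b t)) a
        = (Real.sqrt ((κ₃ t)^2 + (κ₁ t)^2))⁻¹ • (κ₃ t • e t + κ₁ t • b t) := by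
      rw [deriv_const_add]
      have : (fun x : ℝ => (x * (Real.sqrt ((κ₃ t)^2 + (κ₁ t)^2))⁻¹) •
          (κ₃ t • e t + κ₁ t • b t))
          = fun x : ℝ => x • ((Real.sqrt ((κ₃ t)^2 + (κ₁ t)^2))⁻¹ •
            (κ₃ t • e t + κ₁ t • b t)) := by
        funext x; rw [smul_smul]
      rw [this, deriv_smul_const (differentiableAt_fun_id) _, deriv_id'']
      simp
    rw [hd]
    have h1 : ν t ⬝ᵥ e t = 0 := by rw [dotProduct_comm]; exact heν t
    simp [dotProduct_add, dotProduct_smul, h1, hνb t, smul_eq_mul]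
end

section
/- Let γ̂(u) = (u², u³, 0), and e(u) = (2, 3u, 0)/√(4+9u²). Then γ̂'(u) = l(u)e(u) with l(u) = u√(4+9u²); l(0) = 0 and l'(0) = 2 ≠ 0. With ν₁ = (0,0,1), b₁ = e × ν₁, the frame coefficients are κ₁₁ = 0, κ₁₂ = -6/(4+9u²), κ₁₃ = 0; and for the rotated unit normal ν₂ = (3u, -2, 2)/√(8+9u²) with angle θ between ν₁ and ν₂, one has (κ₁₁cos θ + κ₁₂sin θ)·l' ≠ 0 at u = 0. -/
open Matrix Real

/-!
Write `e = s⁻¹ • v` with `v = (2, 3u, 0)` and `s = |v| = √(4 + 9u²)`. Then `γ̂' = u • v = l • e`,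
and `e' = s⁻¹ • v' + c • v` for some scalar `c`. The `v`-component is orthogonal to
`b₁ = e × ν₁`, so `κ₁₂ = s⁻² (v' · (v × ν₁)) = -6 / s²`; `κ₁₁ = 0` because `e` stays in the plane
`z = 0`, and `κ₁₃ = 0` because `ν₁` is constant. At `u = 0` we get `l' = s(0) = 2` and
`sin θ = 1/√2`, so the criterion equals `-3/√2 ≠ 0`.
-/

lemma smul_add_smul_dotProduct_smul_cross {R : Type*} [CommRing R] (a c : R)
    (v v' w : Fin 3 → R) :
    (a • v' + c • v) ⬝ᵥ (a • v) ⨯₃ w = a ^ 2 * (v' ⬝ᵥ v ⨯₃ w) := by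
  simp only [LinearMap.map_smul₂, add_dotProduct, smul_dotProduct, dotProduct_smul,
    dot_self_cross, smul_eq_mul]
  ring

lemma hasDerivAt_cusp (u : ℝ) :
    HasDerivAt (fun x : ℝ => ![x ^ 2, x ^ 3, 0]) (u • ![2, 3 * u, 0]) u := by
  refine hasDerivAt_pi.2 fun i => ?_
  fin_cases i
  · simpa [mul_comm] using hasDerivAt_pow 2 u
  · exact (hasDerivAt_pow 3 u).congr_deriv (by simp; ring)
  · simpa using hasDerivAt_const u (0 : ℝ)

lemma hasDerivAt_cusp_tangent (u : ℝ) :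
    HasDerivAt (fun x : ℝ => ![2, 3 * x, 0]) ![0, 3, 0] u := by
  refine hasDerivAt_pi.2 fun i => ?_
  fin_cases i
  · simpa using hasDerivAt_const u (2 : ℝ)
  · simpa using (hasDerivAt_id u).const_mul (3 : ℝ)
  · simpa using hasDerivAt_const u (0 : ℝ)

lemma differentiableAt_sqrt_four_add_nine_mul_sq (u : ℝ) :
    DifferentiableAt ℝ (fun x : ℝ => √(4 + 9 * x ^ 2)) u :=
  DifferentiableAt.sqrt (by fun_prop) (by positivity)

lemma hasDerivAt_cusp_speed : HasDerivAt (fun u : ℝ => u * √(4 + 9 * u ^ 2)) 2 0 := by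
  refine ((hasDerivAt_id' 0).mul
    (differentiableAt_sqrt_four_add_nine_mul_sq 0).hasDerivAt).congr_deriv ?_
  rw [show (4 : ℝ) + 9 * 0 ^ 2 = 2 ^ 2 by norm_num, sqrt_sq zero_le_two]
  ring

lemma exists_deriv_cusp_unitTangent : ∃ c : ℝ → ℝ, ∀ u,
    deriv (fun x : ℝ => (√(4 + 9 * x ^ 2))⁻¹ • ![2, 3 * x, 0]) u
      = (√(4 + 9 * u ^ 2))⁻¹ • ![0, 3, 0] + c u • ![2, 3 * u, 0] :=
  ⟨_, fun u => (((differentiableAt_sqrt_four_add_nine_mul_sq u).hasDerivAt.inv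
    (by positivity)).smul (hasDerivAt_cusp_tangent u)).deriv⟩

theorem cuspidal_edge_example_general
    (γ e ν₁ b₁ : ℝ → Fin 3 → ℝ) (l κ₁₁ κ₁₂ κ₁₃ cosθ sinθ : ℝ → ℝ)
    (hγ : γ = fun u => ![u^2, u^3, 0])
    (he : e = fun u => (Real.sqrt (4 + 9*u^2))⁻¹ • ![2, 3*u, 0])
    (hν₁ : ν₁ = fun _ => ![0, 0, 1])
    (hb₁ : b₁ = fun u => crossProduct (e u) (ν₁ u))
    (hl : l = fun u => u * Real.sqrt (4 + 9*u^2))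
    (hκ₁₁ : κ₁₁ = fun u => deriv e u ⬝ᵥ ν₁ u)
    (hκ₁₂ : κ₁₂ = fun u => deriv e u ⬝ᵥ b₁ u)
    (hκ₁₃ : κ₁₃ = fun u => deriv ν₁ u ⬝ᵥ b₁ u)
    (hsin : sinθ = fun u => Real.sqrt ((4 + 9*u^2) / (8 + 9*u^2))) :
    (∀ u, deriv γ u = l u • e u)
    ∧ l 0 = 0 ∧ deriv l 0 = 2 ∧ deriv l 0 ≠ 0
    ∧ (∀ u, κ₁₁ u = 0 ∧ κ₁₂ u = -6 / (4 + 9*u^2) ∧ κ₁₃ u = 0)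
    ∧ (κ₁₁ 0 * cosθ 0 + κ₁₂ 0 * sinθ 0) * deriv l 0 ≠ 0 := by
  obtain ⟨c, hde⟩ := exists_deriv_cusp_unitTangent
  have hκ (u : ℝ) : κ₁₁ u = 0 ∧ κ₁₂ u = -6 / (4 + 9 * u ^ 2) ∧ κ₁₃ u = 0 := by
    subst hκ₁₁ hκ₁₂ hκ₁₃ hb₁ he hν₁
    beta_reduce
    refine ⟨?_, ?_, ?_⟩
    · rw [hde]
      simp [dotProduct, Fin.sum_univ_three]
    · have h : ![(0 : ℝ), 3, 0] ⬝ᵥ ![2, 3 * u, 0] ⨯₃ ![0, 0, 1] = -6 := by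
        simp [cross_apply, dotProduct, Fin.sum_univ_three]
        norm_num
      rw [hde, smul_add_smul_dotProduct_smul_cross, inv_pow, sq_sqrt (by positivity), h]
      ring
    · simp
  have hl' : deriv l 0 = 2 := hl ▸ hasDerivAt_cusp_speed.deriv
  refine ⟨fun u => ?_, by simp [hl], hl', by norm_num [hl'], hκ, ?_⟩
  · rw [hγ, (hasDerivAt_cusp u).deriv, hl, he, smul_smul, mul_assoc,
      mul_inv_cancel₀ (by positivity), mul_one]
  · rw [(hκ 0).1, (hκ 0).2.1, hsin, hl']
    norm_num

/-- for the cusp `γ̂(u) = (u², u³, 0)` with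
`e = (2, 3u, 0)/√(4+9u²)` one has `γ̂' = l e` with `l(u) = u√(4+9u²)`,
`l(0) = 0`, `l'(0) = 2 ≠ 0`; the frame coefficients for `ν₁ = (0,0,1)`,
`b₁ = e × ν₁` are `κ₁₁ = 0`, `κ₁₂ = -6/(4+9u²)`, `κ₁₃ = 0`; and the
cuspidal-edge criterion `(κ₁₁ cos θ + κ₁₂ sin θ) l' ≠ 0` holds at `u = 0`. -/
theorem cuspidal_edge_example
    (γ e ν₁ b₁ : ℝ → Fin 3 → ℝ) (l κ₁₁ κ₁₂ κ₁₃ cosθ sinθ : ℝ → ℝ)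
    (hγ : γ = fun u => ![u^2, u^3, 0])
    (he : e = fun u => (Real.sqrt (4 + 9*u^2))⁻¹ • ![2, 3*u, 0])
    (hν₁ : ν₁ = fun _ => ![0, 0, 1])
    (hb₁ : b₁ = fun u => crossProduct (e u) (ν₁ u))
    (hl : l = fun u => u * Real.sqrt (4 + 9*u^2))
    (hκ₁₁ : κ₁₁ = fun u => deriv e u ⬝ᵥ ν₁ u)
    (hκ₁₂ : κ₁₂ = fun u => deriv e u ⬝ᵥ b₁ u)
    (hκ₁₃ : κ₁₃ = fun u => deriv ν₁ u ⬝ᵥ b₁ u)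
    (hcos : cosθ = fun u => 2 / Real.sqrt (8 + 9*u^2))
    (hsin : sinθ = fun u => Real.sqrt ((4 + 9*u^2) / (8 + 9*u^2))) :
    (∀ u, deriv γ u = l u • e u)
    ∧ l 0 = 0 ∧ deriv l 0 = 2 ∧ deriv l 0 ≠ 0
    ∧ (∀ u, κ₁₁ u = 0 ∧ κ₁₂ u = -6 / (4 + 9*u^2) ∧ κ₁₃ u = 0)
    ∧ (κ₁₁ 0 * cosθ 0 + κ₁₂ 0 * sinθ 0) * deriv l 0 ≠ 0 :=
  cuspidal_edge_example_general γ e ν₁ b₁ l κ₁₁ κ₁₂ κ₁₃ cosθ sinθ hγ he hν₁ hb₁ hl hκ₁₁ hκ₁₂ hκ₁₃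
    hsin
end
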